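/- Let ν ≥ 2 be an integer, let φ ∈ L²(ℝ) vanish almost everywhere outside [−ν+1, ν], and let j ∈ ℕ satisfy 2^j ≥ 2ν. For m ∈ {2^j − ν, …, 2^j − 1}, define the periodized function φ^per_{j,m} : [0,1] → ℝ by φ^per_{j,m}(x) = φ_{j,m}(x) + φ_{j, m − 2^j}(x), where φ_{j,k}(x) := 2^{j/2} φ(2^j x − k). Then for every n ∈ ℕ: ∫₀¹ φ^per_{j,m}(x) w_n(x) dx = Σ_{l=−ν+1}^{2^j−m−1} 2^{−j/2} w_n((l+m)/2^j) · ∫₀¹ φ(x+l) w_{⌊n/2^j⌋}(x) dx + Σ_{l=2^j−m}^{ν−1} 2^{−j/2} w_n((l+m−2^j)/2^j) · ∫₀¹ φ(x+l) w_{⌊n/2^j⌋}(x) dx (sums over empty index ranges are zero). -/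

import Mathlib

open MeasureTheory

/-- `natDigit n i` is the `i`-th binary digit `n^(i)` (for `i ≥ 1`) of `n ∈ ℕ`,
so that `n = Σ_{i ≥ 1} n^(i) 2^(i-1)`. -/
def natDigit (n i : ℕ) : ℕ := (n / 2 ^ (i - 1)) % 2

/-- `dyadicDigit x i` is the `i`-th dyadic digit `x^(i) = ⌊2^i x⌋ − 2⌊2^(i−1) x⌋`
(for `i ≥ 1`) of `x ∈ [0,1)`. -/
noncomputable def dyadicDigit (x : ℝ) (i : ℕ) : ℤ :=
  ⌊(2 : ℝ) ^ i * x⌋ - 2 * ⌊(2 : ℝ) ^ (i - 1) * x⌋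

/-- The sequency-ordered Walsh function
`w_n(x) = (−1)^{Σ_{i≥1} (n^(i) + n^(i+1)) x^(i)}`; the sum is finite since
`n^(i) = 0` for `i > n`, so it may be truncated at `i = n + 1`. -/
noncomputable def walsh (n : ℕ) (x : ℝ) : ℝ :=
  (-1 : ℝ) ^ ∑ i ∈ Finset.Icc 1 (n + 1),
    (natDigit n i + natDigit n (i + 1)) * (dyadicDigit x i).toNat

/-- The dyadic XOR `x ⊕ y := Σ_{i≥1} |x^(i) − y^(i)| 2^{−i}` of `x, y ∈ [0,1)`. -/
noncomputable def dyadicXor (x y : ℝ) : ℝ :=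
  ∑' i : ℕ, |(dyadicDigit x (i + 1) : ℝ) - (dyadicDigit y (i + 1) : ℝ)| / 2 ^ (i + 1)

/-! On the dyadic cell `[k/2^j, (k+1)/2^j)` the Walsh function factorises as
`w_n((k+t)/2^j) = w_n(k/2^j) · w_{⌊n/2^j⌋}(t)` for `t ∈ [0,1)`: the first `j` dyadic digits of
`(k+t)/2^j` are those of `k/2^j`, the later ones are those of `t`, and the Walsh exponent splits
accordingly between the low and the high binary digits of `n`. Substituting `x = (k+t)/2^j` on
each cell writes the Walsh coefficient of `φ_{j,c}` as a sum over the shifts `l = k - c`, and the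
support of `φ` cuts the index ranges of the two summands of `φ^per_{j,m}` down to the stated ones. -/

lemma natDigit_eq_zero_of_lt {n i : ℕ} (h : n < i) : natDigit n i = 0 := by
  have : n < 2 ^ (i - 1) :=
    Nat.lt_two_pow_self.trans_le (Nat.pow_le_pow_right two_pos (by omega))
  simp [natDigit, Nat.div_eq_of_lt this]

lemma natDigit_div_two_pow (n j : ℕ) {i : ℕ} (hi : 0 < i) :
    natDigit (n / 2 ^ j) i = natDigit n (j + i) := by
  simp only [natDigit, Nat.div_div_eq_div_mul, ← pow_add, Nat.add_sub_assoc hi]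

lemma walsh_eq_of_lt {n N : ℕ} (hN : n < N) (x : ℝ) :
    walsh n x = (-1 : ℝ) ^ ∑ i ∈ Finset.range N,
      (natDigit n (i + 1) + natDigit n (i + 2)) * (dyadicDigit x (i + 1)).toNat := by
  set F : ℕ → ℕ := fun i => (natDigit n i + natDigit n (i + 1)) * (dyadicDigit x i).toNat
  have hshift : ∑ i ∈ Finset.range N, F (i + 1) = ∑ i ∈ Finset.Ico 1 (N + 1), F i := by
    rw [Finset.range_eq_Ico, Finset.sum_Ico_add']
  rw [walsh]
  refine congrArg _ (Eq.trans ?_ hshift.symm)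
  refine Finset.sum_subset_zero_on_sdiff (fun i hi => ?_) (fun i hi => ?_) fun _ _ => rfl
  · simp only [Finset.mem_Icc, Finset.mem_Ico] at hi ⊢; omega
  · simp only [Finset.mem_sdiff, Finset.mem_Icc, Finset.mem_Ico] at hi
    simp [F, natDigit_eq_zero_of_lt (show n < i by omega),
      natDigit_eq_zero_of_lt (show n < i + 1 by omega)]

lemma floor_two_pow_mul_natCast_add_div_of_le (k : ℕ) {t : ℝ} (ht0 : 0 ≤ t) (ht1 : t < 1)
    {i j : ℕ} (hij : i ≤ j) :
    ⌊(2 : ℝ) ^ i * ((k + t) / 2 ^ j)⌋ = k / 2 ^ (j - i) := by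
  have hscale : (2 : ℝ) ^ i * ((k + t) / 2 ^ j) = (k + t) / ((2 ^ (j - i) : ℕ) : ℝ) := by
    rw [← Nat.sub_add_cancel hij]
    push_cast
    rw [Nat.add_sub_cancel, pow_add]
    field_simp
  rw [hscale, Int.floor_div_natCast, Int.floor_natCast_add,
    Int.floor_eq_zero_iff.mpr ⟨ht0, ht1⟩]
  simp

lemma floor_two_pow_mul_natCast_add_div_of_ge (k : ℕ) (t : ℝ) {i j : ℕ} (hji : j ≤ i) :
    ⌊(2 : ℝ) ^ i * ((k + t) / 2 ^ j)⌋ = 2 ^ (i - j) * k + ⌊(2 : ℝ) ^ (i - j) * t⌋ := by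
  have hscale :
      (2 : ℝ) ^ i * ((k + t) / 2 ^ j) = ((2 ^ (i - j) * k : ℕ) : ℝ) + 2 ^ (i - j) * t := by
    rw [← Nat.sub_add_cancel hji]
    push_cast
    rw [Nat.add_sub_cancel, pow_add]
    field_simp
  rw [hscale, Int.floor_natCast_add]
  push_cast
  rfl

lemma dyadicDigit_natCast_add_div_of_lt (k : ℕ) {t : ℝ} (ht0 : 0 ≤ t) (ht1 : t < 1) {i j : ℕ}
    (hij : i < j) :
    dyadicDigit ((k + t) / 2 ^ j) (i + 1) = dyadicDigit (k / 2 ^ j) (i + 1) := by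
  rw [show (k : ℝ) / 2 ^ j = (k + 0) / 2 ^ j by rw [add_zero]]
  simp only [dyadicDigit, Nat.add_sub_cancel,
    floor_two_pow_mul_natCast_add_div_of_le k ht0 ht1 hij.le,
    floor_two_pow_mul_natCast_add_div_of_le k ht0 ht1 (show i + 1 ≤ j from hij),
    floor_two_pow_mul_natCast_add_div_of_le k le_rfl one_pos hij.le,
    floor_two_pow_mul_natCast_add_div_of_le k le_rfl one_pos (show i + 1 ≤ j from hij)]

lemma dyadicDigit_natCast_add_div_two_pow (k : ℕ) (t : ℝ) (i j : ℕ) :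
    dyadicDigit ((k + t) / 2 ^ j) (j + i + 1) = dyadicDigit t (i + 1) := by
  rw [dyadicDigit, dyadicDigit, Nat.add_sub_cancel, Nat.add_sub_cancel,
    floor_two_pow_mul_natCast_add_div_of_ge k t (show j ≤ j + i + 1 by omega),
    floor_two_pow_mul_natCast_add_div_of_ge k t (show j ≤ j + i by omega),
    show j + i + 1 - j = i + 1 by omega, Nat.add_sub_cancel_left, pow_succ]
  ring

lemma walsh_natCast_add_div_two_pow (n j k : ℕ) {t : ℝ} (ht0 : 0 ≤ t) (ht1 : t < 1) :
    walsh n ((k + t) / 2 ^ j) = walsh n (k / 2 ^ j) * walsh (n / 2 ^ j) t := by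
  have hN : n < j + (n + 1) := by omega
  have hlow : ∀ i ∈ Finset.range j, dyadicDigit ((k + t) / 2 ^ j) (i + 1)
      = dyadicDigit (k / 2 ^ j) (i + 1) := fun i hi =>
    dyadicDigit_natCast_add_div_of_lt k ht0 ht1 (Finset.mem_range.mp hi)
  have hhigh : ∀ i, dyadicDigit (k / 2 ^ j) (j + i + 1) = 0 := fun i => by
    simpa [dyadicDigit] using dyadicDigit_natCast_add_div_two_pow k 0 i j
  rw [walsh_eq_of_lt hN ((k + t) / 2 ^ j), walsh_eq_of_lt hN (k / 2 ^ j),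
    walsh_eq_of_lt (Nat.lt_succ_of_le (Nat.div_le_self _ _)) t, ← pow_add,
    Finset.sum_range_add _ j (n + 1), Finset.sum_range_add _ j (n + 1),
    Finset.sum_congr rfl fun i hi => by rw [hlow i hi]]
  simp only [hhigh, dyadicDigit_natCast_add_div_two_pow, natDigit_div_two_pow n j (Nat.succ_pos _),
    Int.toNat_zero, mul_zero, Finset.sum_const_zero, add_zero]
  -- the indices `j + i + 2` and `j + (i + 1 + 1)` agree only up to `Nat.add` reduction
  rfl

lemma measurable_walsh (n : ℕ) : Measurable (walsh n) := by
  have hdigit (i : ℕ) : Measurable fun x : ℝ => dyadicDigit x i :=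
    (Int.measurable_floor.comp (measurable_const_mul _)).sub
      ((Int.measurable_floor.comp (measurable_const_mul _)).const_mul 2)
  have htoNat (i : ℕ) : Measurable fun x : ℝ => (dyadicDigit x i).toNat :=
    (measurable_from_top (f := Int.toNat)).comp (hdigit i)
  exact measurable_from_top.comp <| Finset.measurable_sum _ fun i _ => (htoNat i).const_mul _

lemma norm_walsh_le_one (n : ℕ) (x : ℝ) : ‖walsh n x‖ ≤ 1 := by
  simp [walsh, norm_pow]

lemma IntervalIntegrable.mul_walsh {f : ℝ → ℝ} {a b : ℝ}
    (hf : IntervalIntegrable f volume a b) (n : ℕ) :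
    IntervalIntegrable (fun x => f x * walsh n x) volume a b := by
  rw [intervalIntegrable_iff] at hf ⊢
  exact hf.mul_bdd (measurable_walsh n).aestronglyMeasurable
    (Filter.Eventually.of_forall (norm_walsh_le_one n))

/-- The paper's `φ_{j,c}`. -/
noncomputable def dyadicDilation (φ : ℝ → ℝ) (j : ℕ) (c x : ℝ) : ℝ :=
  2 ^ ((j : ℝ) / 2) * φ (2 ^ j * x - c)

lemma intervalIntegrable_dyadicDilation_mul_walsh {φ : ℝ → ℝ} (hφ : LocallyIntegrable φ)
    (j n : ℕ) (c a b : ℝ) :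
    IntervalIntegrable (fun x => dyadicDilation φ j c x * walsh n x) volume a b := by
  have hP : (2 : ℝ) ^ j ≠ 0 := by positivity
  have h := (((hφ.integrableOn_isCompact isCompact_uIcc).intervalIntegrable
    (a := 2 ^ j * a - c) (b := 2 ^ j * b - c)).comp_sub_right c).comp_mul_left (c := 2 ^ j)
  simp only [sub_add_cancel, mul_div_cancel_left₀ _ hP] at h
  exact (h.const_mul _).mul_walsh n

lemma integral_comp_two_pow_mul_mul_walsh_cell (g : ℝ → ℝ) (n j k : ℕ) :
    ∫ x in (k : ℝ) / 2 ^ j..(k + 1) / 2 ^ j, g (2 ^ j * x) * walsh n x =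
      (2 ^ j)⁻¹ * walsh n (k / 2 ^ j) * ∫ t in (0 : ℝ)..1, g (t + k) * walsh (n / 2 ^ j) t := by
  have hP : (2 : ℝ) ^ j ≠ 0 := by positivity
  have hcell : ∫ t in (0 : ℝ)..1,
      g (2 ^ j * (t / 2 ^ j + k / 2 ^ j)) * walsh n (t / 2 ^ j + k / 2 ^ j) =
        walsh n (k / 2 ^ j) * ∫ t in (0 : ℝ)..1, g (t + k) * walsh (n / 2 ^ j) t := by
    rw [← intervalIntegral.integral_const_mul]
    refine intervalIntegral.integral_congr_uIoo fun t ht => ?_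
    rw [Set.uIoo_of_le zero_le_one] at ht
    rw [← add_div, add_comm t, walsh_natCast_add_div_two_pow n j k ht.1.le ht.2,
      mul_div_cancel₀ _ hP]
    ring
  rw [intervalIntegral.integral_comp_div_add (f := fun x => g (2 ^ j * x) * walsh n x) hP,
    zero_div, zero_add, ← add_div, add_comm 1] at hcell
  rw [mul_assoc, ← hcell, smul_eq_mul, inv_mul_cancel_left₀ hP]

lemma Finset.sum_range_natCast_sub {M : Type*} [AddCommMonoid M] (f : ℤ → M) (N : ℕ)
    (c : ℤ) :
    ∑ k ∈ Finset.range N, f (k - c) = ∑ l ∈ Finset.Ico (-c) (N - c), f l := by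
  refine Finset.sum_nbij' (fun k => k - c) (fun l => (l + c).toNat) ?_ ?_ ?_ ?_ fun _ _ => rfl <;>
    intro x hx <;> simp only [Finset.mem_range, Finset.mem_Ico] at hx ⊢ <;>
    omega

lemma integral_dyadicDilation_mul_walsh {φ : ℝ → ℝ} (hφ : LocallyIntegrable φ) (n j : ℕ)
    (c : ℤ) :
    ∫ x in (0 : ℝ)..1, dyadicDilation φ j c x * walsh n x =
      ∑ l ∈ Finset.Ico (-c) (2 ^ j - c), (2 : ℝ) ^ (-(j : ℝ) / 2) * walsh n ((l + c) / 2 ^ j) *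
        ∫ x in (0 : ℝ)..1, φ (x + l) * walsh (n / 2 ^ j) x := by
  have hP : (2 : ℝ) ^ j ≠ 0 := by positivity
  have hscale : ((2 : ℝ) ^ j)⁻¹ * 2 ^ ((j : ℝ) / 2) = 2 ^ (-(j : ℝ) / 2) := by
    rw [← Real.rpow_natCast, ← Real.rpow_neg zero_le_two, ← Real.rpow_add two_pos]
    ring_nf
  have hcells := intervalIntegral.sum_integral_adjacent_intervals (μ := volume)
    (a := fun k : ℕ => (k : ℝ) / 2 ^ j) (n := 2 ^ j)
    fun k _ => intervalIntegrable_dyadicDilation_mul_walsh hφ j n c _ _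
  simp only [Nat.cast_zero, zero_div, Nat.cast_pow, Nat.cast_ofNat, div_self hP, Nat.cast_add,
    Nat.cast_one] at hcells
  rw [← hcells, ← Nat.cast_ofNat (R := ℤ), ← Nat.cast_pow, ← Finset.sum_range_natCast_sub]
  refine Finset.sum_congr rfl fun k _ => ?_
  simp only [dyadicDilation]
  rw [integral_comp_two_pow_mul_mul_walsh_cell (fun y => 2 ^ ((j : ℝ) / 2) * φ (y - c))]
  simp only [Int.cast_sub, Int.cast_natCast, sub_add_cancel, add_sub_assoc, mul_assoc,
    intervalIntegral.integral_const_mul]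
  rw [← hscale]
  ring

lemma integral_comp_add_mul_eq_zero {φ : ℝ → ℝ} {a b l : ℝ}
    (hsupp : ∀ᵐ x, x ∉ Set.Icc a b → φ x = 0) (hl : l + 1 ≤ a ∨ b ≤ l) (g : ℝ → ℝ) :
    ∫ x in (0 : ℝ)..1, φ (x + l) * g x = 0 := by
  rw [intervalIntegral.integral_of_le zero_le_one, integral_Ioc_eq_integral_Ioo]
  refine integral_eq_zero_of_ae ?_
  rw [Filter.EventuallyEq, ae_restrict_iff' measurableSet_Ioo]
  filter_upwards [(measurePreserving_add_right volume l).quasiMeasurePreserving.ae hsupp]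
    with x hx hxI
  rw [Pi.zero_apply, hx fun h => ?_, zero_mul]
  rcases hl with hl | hl
  · linarith [h.1, hxI.2]
  · linarith [h.2, hxI.1]

theorem walsh_periodic_right_edge_general (ν : ℕ) (φ : ℝ → ℝ)
    (hL2 : MemLp φ 2 volume)
    (hsupp : ∀ᵐ x : ℝ, x ∉ Set.Icc (-(ν : ℝ) + 1) (ν : ℝ) → φ x = 0)
    (j : ℕ) (hj : 2 * ν ≤ 2 ^ j) (m : ℕ) (hm1 : 2 ^ j ≤ m + ν) (hm2 : m < 2 ^ j)
    (n : ℕ) :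
    ∫ x in (0 : ℝ)..1,
        ((2 : ℝ) ^ ((j : ℝ) / 2) * φ (2 ^ j * x - m) +
          (2 : ℝ) ^ ((j : ℝ) / 2) * φ (2 ^ j * x - ((m : ℝ) - 2 ^ j))) * walsh n x =
      (∑ l ∈ Finset.Icc (-(ν : ℤ) + 1) (2 ^ j - (m : ℤ) - 1),
        (2 : ℝ) ^ (-(j : ℝ) / 2) * walsh n (((l : ℝ) + m) / 2 ^ j) *
          ∫ x in (0 : ℝ)..1, φ (x + l) * walsh (n / 2 ^ j) x) +
      ∑ l ∈ Finset.Icc (2 ^ j - (m : ℤ)) ((ν : ℤ) - 1),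
        (2 : ℝ) ^ (-(j : ℝ) / 2) * walsh n (((l : ℝ) + m - 2 ^ j) / 2 ^ j) *
          ∫ x in (0 : ℝ)..1, φ (x + l) * walsh (n / 2 ^ j) x := by
  have hφ : LocallyIntegrable φ := hL2.locallyIntegrable one_le_two
  have hvanish (l : ℤ) (hl : l ≤ -ν ∨ ν ≤ l) :
      ∫ x in (0 : ℝ)..1, φ (x + l) * walsh (n / 2 ^ j) x = 0 := by
    refine integral_comp_add_mul_eq_zero hsupp ?_ _
    rcases hl with hl | hl
    · left
      linarith [show (l : ℝ) ≤ -ν by exact_mod_cast hl]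
    · exact Or.inr (by exact_mod_cast hl)
  have hsplit := intervalIntegral.integral_add
    (intervalIntegrable_dyadicDilation_mul_walsh hφ j n ((m : ℤ) : ℝ) 0 1)
    (intervalIntegrable_dyadicDilation_mul_walsh hφ j n (((m : ℤ) - 2 ^ j : ℤ) : ℝ) 0 1)
  rw [integral_dyadicDilation_mul_walsh hφ, integral_dyadicDilation_mul_walsh hφ] at hsplit
  simp only [dyadicDilation, ← add_mul] at hsplit
  push_cast [← add_sub_assoc] at hsplit
  rw [hsplit]
  zify at hj hm1 hm2
  congr 1
  all_goals
    refine (Finset.sum_subset (fun l hl => ?_) fun l hl hl' => ?_).symm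
    · simp only [Finset.mem_Icc, Finset.mem_Ico] at hl ⊢
      omega
    · simp only [Finset.mem_Icc, Finset.mem_Ico, not_and_or, not_le] at hl hl'
      rw [hvanish l (by omega), mul_zero]

/-- Right-edge periodized scaling functions: for `ν ≥ 2`,
`φ ∈ L²(ℝ)` supported in `[−ν+1, ν]`, `2^j ≥ 2ν` and `2^j − ν ≤ m ≤ 2^j − 1`, the
Walsh coefficients of `φ^per_{j,m} = φ_{j,m} + φ_{j,m−2^j}` on `[0,1]` satisfy the
stated two-sum formula. -/
theorem walsh_periodic_right_edge (ν : ℕ) (hν : 2 ≤ ν) (φ : ℝ → ℝ)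
    (hL2 : MemLp φ 2 volume)
    (hsupp : ∀ᵐ x : ℝ, x ∉ Set.Icc (-(ν : ℝ) + 1) (ν : ℝ) → φ x = 0)
    (j : ℕ) (hj : 2 * ν ≤ 2 ^ j) (m : ℕ) (hm1 : 2 ^ j ≤ m + ν) (hm2 : m < 2 ^ j)
    (n : ℕ) :
    ∫ x in (0 : ℝ)..1,
        ((2 : ℝ) ^ ((j : ℝ) / 2) * φ (2 ^ j * x - m) +
          (2 : ℝ) ^ ((j : ℝ) / 2) * φ (2 ^ j * x - ((m : ℝ) - 2 ^ j))) * walsh n x =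
      (∑ l ∈ Finset.Icc (-(ν : ℤ) + 1) (2 ^ j - (m : ℤ) - 1),
        (2 : ℝ) ^ (-(j : ℝ) / 2) * walsh n (((l : ℝ) + m) / 2 ^ j) *
          ∫ x in (0 : ℝ)..1, φ (x + l) * walsh (n / 2 ^ j) x) +
      ∑ l ∈ Finset.Icc (2 ^ j - (m : ℤ)) ((ν : ℤ) - 1),
        (2 : ℝ) ^ (-(j : ℝ) / 2) * walsh n (((l : ℝ) + m - 2 ^ j) / 2 ^ j) *
          ∫ x in (0 : ℝ)..1, φ (x + l) * walsh (n / 2 ^ j) x :=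
  walsh_periodic_right_edge_general ν φ hL2 hsupp j hj m hm1 hm2 n
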